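/- arXiv:2409.00526 — 3 statements merged into one kernel-verified Lean document; each statement's English description precedes it below -/
import Mathlib

section
/- Let (Ω, P) be a probability space, n ≥ 2, x : Fin n → ℝ with SS_x = ∑_i (x_i − x̄)² > 0, let T, b ∈ ℝ, σ > 0, and let ε_1,…,ε_n be independent real random variables each with law the Gaussian measure of mean 0 and variance σ². Define y_i = T·x_i + b + ε_i and T̂ = ∑_i (x_i − x̄)(y_i − ȳ)/SS_x. Then the law of T̂ is the Gaussian measure on ℝ of mean T and variance σ²/SS_x. -/
/-!
Because the centred design `x i - x̄` sums to zero, the intercept and the noise mean drop out of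
the numerator, and `T̂ = T + ∑ i, cᵢ εᵢ` with `cᵢ = (x i - x̄) / SS_x`. A linear combination of
independent Gaussians is Gaussian (characteristic functions multiply), here of mean `0` and
variance `σ² ∑ cᵢ² = σ² / SS_x`.
-/

open MeasureTheory ProbabilityTheory
open scoped NNReal

namespace ProbabilityTheory

variable {Ω ι : Type*} {mΩ : MeasurableSpace Ω} {P : Measure Ω} [IsProbabilityMeasure P]
  [Fintype ι] {X : ι → Ω → ℝ} {μ : ι → ℝ} {v : ι → ℝ≥0}

lemma iIndepFun.map_sum_eq_gaussianReal (hX : ∀ i, Measurable (X i)) (hindep : iIndepFun X P)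
    (hlaw : ∀ i, P.map (X i) = gaussianReal (μ i) (v i)) :
    P.map (fun ω ↦ ∑ i, X i ω) = gaussianReal (∑ i, μ i) (∑ i, v i) := by
  refine Measure.ext_of_charFun (funext fun t ↦ ?_)
  rw [hindep.charFun_map_fun_sum_eq_prod (fun i ↦ (hX i).aemeasurable), Finset.prod_apply]
  simp_rw [hlaw, charFun_gaussianReal, ← Complex.exp_sum]
  push_cast
  rw [Finset.sum_sub_distrib, ← Finset.sum_div, ← Finset.sum_mul, ← Finset.sum_mul,
    ← Finset.mul_sum]

lemma iIndepFun.map_sum_mul_eq_gaussianReal (hX : ∀ i, Measurable (X i))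
    (hindep : iIndepFun X P) (hlaw : ∀ i, P.map (X i) = gaussianReal (μ i) (v i)) (c : ι → ℝ) :
    P.map (fun ω ↦ ∑ i, c i * X i ω) =
      gaussianReal (∑ i, c i * μ i) (∑ i, (.mk (c i ^ 2) (sq_nonneg _) : ℝ≥0) * v i) :=
  (hindep.comp (fun i ↦ (c i * ·)) fun i ↦ measurable_const_mul (c i)).map_sum_eq_gaussianReal
    (fun i ↦ (hX i).const_mul (c i))
    fun i ↦ (gaussianReal_const_mul ⟨(hX i).aemeasurable, hlaw i⟩ (c i)).map_eq

end ProbabilityTheory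

section CentredSums

variable {ι : Type*} [Fintype ι]

lemma sum_sub_sum_div_card_eq_zero (x : ι → ℝ) :
    ∑ i, (x i - (∑ j, x j) / Fintype.card ι) = 0 := by
  rcases isEmpty_or_nonempty ι with hι | hι
  · simp
  · rw [Finset.sum_sub_distrib, Finset.sum_const, Finset.card_univ, nsmul_eq_mul,
      mul_div_cancel₀ _ (by positivity), sub_self]

lemma sum_mul_sub_const_of_sum_eq_zero {a : ι → ℝ} (ha : ∑ i, a i = 0) (y : ι → ℝ) (c : ℝ) :
    ∑ i, a i * (y i - c) = ∑ i, a i * y i := by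
  simp only [mul_sub, Finset.sum_sub_distrib, ← Finset.sum_mul, ha, zero_mul, sub_zero]

lemma sum_sub_mul_affine_sub_of_sum_sub_eq_zero {x : ι → ℝ} {xbar : ℝ}
    (hxbar : ∑ i, (x i - xbar) = 0) (e : ι → ℝ) (T b c : ℝ) :
    ∑ i, (x i - xbar) * (T * x i + b + e i - c) =
      T * ∑ i, (x i - xbar) ^ 2 + ∑ i, (x i - xbar) * e i := by
  have hdesign : ∑ i, (x i - xbar) * x i = ∑ i, (x i - xbar) ^ 2 := by
    simp only [sq, ← sum_mul_sub_const_of_sum_eq_zero hxbar x xbar]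
  rw [sum_mul_sub_const_of_sum_eq_zero hxbar]
  simp only [mul_add, Finset.sum_add_distrib, ← Finset.sum_mul, hxbar, zero_mul, add_zero]
  rw [← hdesign, Finset.mul_sum]
  simp only [mul_left_comm]

end CentredSums

theorem ols_slope_gaussian_law_general
    {Ω : Type*} [MeasurableSpace Ω] (P : Measure Ω) [IsProbabilityMeasure P]
    (n : ℕ) (x : Fin n → ℝ)
    (xbar SSx : ℝ)
    (hxbar : xbar = (∑ i, x i) / n)
    (hSSx : SSx = ∑ i, (x i - xbar) ^ 2)
    (hSSx_pos : 0 < SSx)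
    (T b σ : ℝ)
    (ε : Fin n → Ω → ℝ)
    (hmeas : ∀ i, Measurable (ε i))
    (hindep : iIndepFun ε P)
    (hlaw : ∀ i, Measure.map (ε i) P = gaussianReal 0 ((σ ^ 2).toNNReal))
    (y : Fin n → Ω → ℝ)
    (hy : ∀ i ω, y i ω = T * x i + b + ε i ω)
    (That : Ω → ℝ)
    (hThat : ∀ ω, That ω =
        (∑ i, (x i - xbar) * (y i ω - (∑ j, y j ω) / n)) / SSx) :
    Measure.map That P = gaussianReal T ((σ ^ 2 / SSx).toNNReal) := by
  set c : Fin n → ℝ := fun i ↦ (x i - xbar) / SSx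
  have hcentred : ∑ i, (x i - xbar) = 0 := by
    simpa [hxbar] using sum_sub_sum_div_card_eq_zero x
  have hThat_eq : That = fun ω ↦ ∑ i, c i * ε i ω + T := by
    funext ω
    simp only [hThat, hy, sum_sub_mul_affine_sub_of_sum_sub_eq_zero hcentred, ← hSSx, c,
      div_mul_eq_mul_div, ← Finset.sum_div]
    field_simp [hSSx_pos.ne']
    ring
  have hsum := hindep.map_sum_mul_eq_gaussianReal hmeas hlaw c
  rw [hThat_eq, (gaussianReal_add_const ⟨by fun_prop, hsum⟩ T).map_eq]
  congr 1
  · simp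
  · rw [← NNReal.coe_inj]
    push_cast
    rw [Real.coe_toNNReal _ (sq_nonneg σ), Real.coe_toNNReal _ (by positivity),
      ← Finset.sum_mul]
    simp only [c, div_pow, ← Finset.sum_div, ← hSSx]
    field_simp

/-- With i.i.d. Gaussian noise `ε i ~ N(0, σ²)`, the OLS slope estimator
is Gaussian: `T̂ ~ N(T, σ²/SSx)`. -/
theorem ols_slope_gaussian_law
    {Ω : Type*} [MeasurableSpace Ω] (P : Measure Ω) [IsProbabilityMeasure P]
    (n : ℕ) (hn : 2 ≤ n) (x : Fin n → ℝ)
    (xbar SSx : ℝ)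
    (hxbar : xbar = (∑ i, x i) / n)
    (hSSx : SSx = ∑ i, (x i - xbar) ^ 2)
    (hSSx_pos : 0 < SSx)
    (T b σ : ℝ) (hσ : 0 < σ)
    (ε : Fin n → Ω → ℝ)
    (hmeas : ∀ i, Measurable (ε i))
    (hindep : iIndepFun ε P)
    (hlaw : ∀ i, Measure.map (ε i) P = gaussianReal 0 ((σ ^ 2).toNNReal))
    (y : Fin n → Ω → ℝ)
    (hy : ∀ i ω, y i ω = T * x i + b + ε i ω)
    (That : Ω → ℝ)
    (hThat : ∀ ω, That ω =
        (∑ i, (x i - xbar) * (y i ω - (∑ j, y j ω) / n)) / SSx) :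
    Measure.map That P = gaussianReal T ((σ ^ 2 / SSx).toNNReal) :=
  ols_slope_gaussian_law_general P n x xbar SSx hxbar hSSx hSSx_pos T b σ ε hmeas hindep hlaw y hy
    That hThat
end

section
/- Let n ≥ 2, let x, x' : Fin n → ℕ be strictly increasing with x_1 = x'_1 = 0, and let T, T' > 0 and b, b' ∈ ℝ satisfy T·x_i + b = T'·x'_i + b' for all i = 1,…,n. Then b = b' and T·x_i = T'·x'_i for all i. If moreover the greatest common divisor of x_1,…,x_n equals 1 and T' ≤ T, then there exists a positive natural number λ such that x'_i = λ·x_i for all i and T = λ·T'. (This is the paper's claim that, in the noise-free/exact-fit regime, any other exact solution x* is an integer multiple of the true index sequence, x* = λx, so the depth-first search reaches the true solution λ = 1 first.) -/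
/-- In the exact-fit regime, two solutions `(x, T, b)` and `(x', T', b')`
fitting the same observations satisfy `b = b'` and `T·x i = T'·x' i`; if
moreover `gcd x = 1` and `T' ≤ T`, then `x' = λ·x` and `T = λ·T'` for some
positive integer `λ`. -/
theorem exact_fit_solutions_are_multiples
    (n : ℕ) (hn : 2 ≤ n) (x x' : Fin n → ℕ)
    (hmono : StrictMono x) (hmono' : StrictMono x')
    (hx0 : x ⟨0, by omega⟩ = 0) (hx0' : x' ⟨0, by omega⟩ = 0)
    (T T' : ℝ) (hT : 0 < T) (hT' : 0 < T') (b b' : ℝ)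
    (hfit : ∀ i, T * (x i : ℝ) + b = T' * (x' i : ℝ) + b') :
    b = b' ∧ (∀ i, T * (x i : ℝ) = T' * (x' i : ℝ)) ∧
      (Finset.univ.gcd x = 1 → T' ≤ T →
        ∃ lam : ℕ, 0 < lam ∧ (∀ i, x' i = lam * x i) ∧ T = (lam : ℝ) * T') := by
  have hb : b = b' := by
    have h0 := hfit ⟨0, by omega⟩
    rw [hx0, hx0'] at h0
    simpa using h0
  have hTx : ∀ i, T * (x i : ℝ) = T' * (x' i : ℝ) := by
    intro i
    have := hfit i
    linarith [hb]
  refine ⟨hb, hTx, fun hgcd hle => ?_⟩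
  set i1 : Fin n := ⟨1, by omega⟩ with hi1
  set a := x i1 with ha_def
  set a' := x' i1 with ha'_def
  have ha : 0 < a := by
    have := hmono (show (⟨0, by omega⟩ : Fin n) < i1 by simp [hi1, Fin.lt_def])
    omega
  have ha' : 0 < a' := by
    have := hmono' (show (⟨0, by omega⟩ : Fin n) < i1 by simp [hi1, Fin.lt_def])
    omega
  have cross : ∀ i, a * x' i = a' * x i := by
    intro i
    have h1 := hTx i
    have h2 := hTx i1
    have hr : T' * ((a : ℝ) * x' i) = T' * ((a' : ℝ) * x i) := by
      linear_combination (x i : ℝ) * h2 - (a : ℝ) * h1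
    have := mul_left_cancel₀ (ne_of_gt hT') hr
    exact_mod_cast this
  set g := Nat.gcd a a' with hg_def
  have hg : 0 < g := Nat.gcd_pos_of_pos_left _ ha
  set q := a / g with hq_def
  set p := a' / g with hp_def
  have haq : a = g * q := (Nat.div_mul_cancel (Nat.gcd_dvd_left a a')).symm.trans (Nat.mul_comm _ _)
  have hap : a' = g * p := (Nat.div_mul_cancel (Nat.gcd_dvd_right a a')).symm.trans (Nat.mul_comm _ _)
  have hcop : Nat.Coprime q p := Nat.coprime_div_gcd_div_gcd hg
  have hqp : ∀ i, q * x' i = p * x i := by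
    intro i
    have := cross i
    rw [haq, hap] at this
    have : g * (q * x' i) = g * (p * x i) := by ring_nf; ring_nf at this; omega
    exact Nat.eq_of_mul_eq_mul_left hg this
  have hq1 : q = 1 := by
    have hqdvd : q ∣ Finset.univ.gcd x := by
      refine Finset.dvd_gcd fun i _ => ?_
      have : q ∣ p * x i := ⟨x' i, (hqp i).symm⟩
      exact (Nat.Coprime.dvd_of_dvd_mul_left hcop this)
    rw [hgcd] at hqdvd
    exact Nat.eq_one_of_dvd_one hqdvd
  have hxp : ∀ i, x' i = p * x i := by
    intro i
    have := hqp i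
    rwa [hq1, one_mul] at this
  have hp0 : 0 < p := by
    rcases Nat.eq_zero_or_pos p with h | h
    · rw [h, Nat.mul_zero] at hap; omega
    · exact h
  refine ⟨p, hp0, hxp, ?_⟩
  have h2 := hTx i1
  have hpa : (a' : ℝ) = (p : ℝ) * (a : ℝ) := by exact_mod_cast hxp i1
  have haR : (0 : ℝ) < (a : ℝ) := by exact_mod_cast ha
  have : T * (a : ℝ) = (p : ℝ) * T' * (a : ℝ) := by
    rw [← ha_def, ← ha'_def] at h2
    rw [h2, hpa]; ring
  exact mul_right_cancel₀ (ne_of_gt haR) this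
end

section
/- For every n ∈ ℝⁿ-valued vector a = (a_1,…,a_n) of real weights and every x : Fin n → ℝ with SS_x = ∑_i (x_i − x̄)² > 0, if ∑_i a_i = 0 and ∑_i a_i·x_i = 1, then ∑_i a_i² ≥ 1/SS_x, with equality if and only if a_i = (x_i − x̄)/SS_x for all i. (This is the Gauss–Markov optimality of the OLS slope weights in the simple linear model: among all linear unbiased estimators T̂_a = ∑_i a_i y_i of the slope T, the OLS estimator has minimal variance σ²·∑_i a_i².) -/
/-- Gauss–Markov optimality of the OLS slope weights: among weights `a` with
`∑ a i = 0` and `∑ a i · x i = 1`, the squared norm `∑ a i ²` is at least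
`1/SSx`, with equality iff `a i = (x i − x̄)/SSx` for all `i`. -/
theorem gauss_markov_slope_weights
    (n : ℕ) (a x : Fin n → ℝ)
    (xbar SSx : ℝ)
    (hxbar : xbar = (∑ i, x i) / n)
    (hSSx : SSx = ∑ i, (x i - xbar) ^ 2)
    (hSSx_pos : 0 < SSx)
    (hsum : ∑ i, a i = 0)
    (hax : ∑ i, a i * x i = 1) :
    (1 / SSx ≤ ∑ i, (a i) ^ 2) ∧
      ((∑ i, (a i) ^ 2 = 1 / SSx) ↔ ∀ i, a i = (x i - xbar) / SSx) := by
  have hne : SSx ≠ 0 := ne_of_gt hSSx_pos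
  have hac : ∑ i, a i * ((x i - xbar) / SSx) = 1 / SSx := by
    have : ∑ i, a i * ((x i - xbar) / SSx)
        = ((∑ i, a i * x i) - xbar * ∑ i, a i) / SSx := by
      rw [eq_div_iff hne, Finset.sum_mul, Finset.mul_sum, ← Finset.sum_sub_distrib]
      apply Finset.sum_congr rfl
      intro i _
      field_simp
    rw [this, hax, hsum]
    ring
  have hcc : ∑ i, ((x i - xbar) / SSx) ^ 2 = 1 / SSx := by
    have : ∑ i, ((x i - xbar) / SSx) ^ 2 = (∑ i, (x i - xbar) ^ 2) / SSx ^ 2 := by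
      rw [Finset.sum_div]
      apply Finset.sum_congr rfl
      intro i _
      rw [div_pow]
    rw [this, ← hSSx]
    field_simp
  have key : ∑ i, (a i - (x i - xbar) / SSx) ^ 2 = (∑ i, (a i) ^ 2) - 1 / SSx := by
    have expand : ∀ i ∈ Finset.univ, (a i - (x i - xbar) / SSx) ^ 2
        = (a i) ^ 2 - 2 * (a i * ((x i - xbar) / SSx)) + ((x i - xbar) / SSx) ^ 2 := by
      intro i _; ring
    rw [Finset.sum_congr rfl expand, Finset.sum_add_distrib, Finset.sum_sub_distrib,
      hcc, ← Finset.mul_sum, hac]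
    ring
  have hnn : 0 ≤ ∑ i, (a i - (x i - xbar) / SSx) ^ 2 :=
    Finset.sum_nonneg fun i _ => sq_nonneg _
  constructor
  · linarith [key, hnn]
  · constructor
    · intro heq
      have hz : ∑ i, (a i - (x i - xbar) / SSx) ^ 2 = 0 := by linarith [key]
      intro i
      have := (Finset.sum_eq_zero_iff_of_nonneg (fun i _ => sq_nonneg
        (a i - (x i - xbar) / SSx))).mp hz i (Finset.mem_univ i)
      have h0 : a i - (x i - xbar) / SSx = 0 := by
        exact pow_eq_zero_iff (by norm_num) |>.mp this
      linarith
    · intro h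
      have : ∑ i, (a i) ^ 2 = ∑ i, ((x i - xbar) / SSx) ^ 2 := by
        apply Finset.sum_congr rfl; intro i _; rw [h i]
      rw [this, hcc]
end
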